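/- Let β ∈ [1,2] and let f : [0,1] → ℝ be continuous with f(x) ≠ 0 for all x ∈ [0,1]. If dim_B̄ G(f) = β, then there exist continuous g, h : [0,1] → ℝ with f = g·h and dim_B̄ G(g) = dim_B̄ G(h) = β. -/

import Mathlib

open Set Filter Metric

noncomputable def coverNum {α : Type*} [PseudoMetricSpace α] (F : Set α) (δ : ℝ) : ℕ :=
  sInf {n : ℕ | ∃ t : Finset α, t.card = n ∧ F ⊆ ⋃ p ∈ t, Metric.closedBall p δ}

noncomputable def upperBoxDim {α : Type*} [PseudoMetricSpace α] (F : Set α) : ℝ :=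
  Filter.limsup (fun δ : ℝ => Real.log (coverNum F δ) / -Real.log δ)
    (nhdsWithin (0 : ℝ) (Set.Ioi 0))

noncomputable def lowerBoxDim {α : Type*} [PseudoMetricSpace α] (F : Set α) : ℝ :=
  Filter.liminf (fun δ : ℝ => Real.log (coverNum F δ) / -Real.log δ)
    (nhdsWithin (0 : ℝ) (Set.Ioi 0))

/-- Graph of `f` over the set `X`. -/
def fnGraphOn (f : ℝ → ℝ) (X : Set ℝ) : Set (ℝ × ℝ) := (fun x => (x, f x)) '' X

/-- Graph of `f` over `[0,1]`. -/
def G (f : ℝ → ℝ) : Set (ℝ × ℝ) := fnGraphOn f (Set.Icc 0 1)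

/-!
Choose `a > 0` with `|a * f| ≤ 1/4` on `[0,1]` and put `g = f * (1 + a * f)`, `h = (1 + a * f)⁻¹`.
Both `y ↦ y * (1 + a * y)` and `y ↦ (1 + a * y)⁻¹` are bi-Lipschitz on `[-1/(4a), 1/(4a)]`, so
`(x, f x) ↦ (x, g x)` and `(x, f x) ↦ (x, h x)` are bi-Lipschitz bijections between the graphs.
A bi-Lipschitz map changes covering numbers only by rescaling `δ` by a constant factor, which
leaves `log N(δ) / -log δ`, and hence the upper box dimension, unchanged.
-/

open Topology
open scoped NNReal

noncomputable def boxRatio {α : Type*} [PseudoMetricSpace α] (F : Set α) (δ : ℝ) : ℝ :=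
  Real.log (coverNum F δ) / -Real.log δ

section CoverNum

variable {α β : Type*} [PseudoMetricSpace α] [PseudoMetricSpace β]

theorem upperBoxDim_eq_limsup_boxRatio (F : Set α) :
    upperBoxDim F = limsup (boxRatio F) (𝓝[>] 0) :=
  rfl

theorem coverNum_le_card {F : Set α} {δ : ℝ} (t : Finset α)
    (h : F ⊆ ⋃ p ∈ t, closedBall p δ) : coverNum F δ ≤ t.card :=
  Nat.sInf_le ⟨t, rfl, h⟩

theorem exists_card_eq_coverNum {F : Set α} (hF : TotallyBounded F) {δ : ℝ} (hδ : 0 < δ) :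
    ∃ t : Finset α, t.card = coverNum F δ ∧ F ⊆ ⋃ p ∈ t, closedBall p δ := by
  obtain ⟨s, hs, hFs⟩ := totallyBounded_iff.1 hF δ hδ
  refine Nat.sInf_mem (s := {n | ∃ t : Finset α, t.card = n ∧ F ⊆ ⋃ p ∈ t, closedBall p δ})
    ⟨_, hs.toFinset, rfl, fun x hx => ?_⟩
  obtain ⟨p, hp, hxp⟩ := mem_iUnion₂.1 (hFs hx)
  exact mem_iUnion₂.2 ⟨p, hs.mem_toFinset.2 hp, ball_subset_closedBall hxp⟩

theorem exists_cover_centers_mem {F : Set α} {δ : ℝ} {t : Finset α}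
    (ht : F ⊆ ⋃ p ∈ t, closedBall p δ) :
    ∃ t' : Finset α, t'.card ≤ t.card ∧ ↑t' ⊆ F ∧ F ⊆ ⋃ p ∈ t', closedBall p (2 * δ) := by
  classical
  let pick (p : α) : α := if h : (F ∩ closedBall p δ).Nonempty then h.some else p
  refine ⟨(t.filter fun p => (F ∩ closedBall p δ).Nonempty).image pick,
    Finset.card_image_le.trans (Finset.card_filter_le _ _), ?_, fun x hx => ?_⟩
  · intro y hy
    obtain ⟨p, hp, rfl⟩ := Finset.mem_image.1 hy
    have hne := (Finset.mem_filter.1 hp).2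
    simp only [pick, dif_pos hne]
    exact hne.some_mem.1
  · obtain ⟨p, hp, hxp⟩ := mem_iUnion₂.1 (ht hx)
    have hne : (F ∩ closedBall p δ).Nonempty := ⟨x, hx, hxp⟩
    refine mem_iUnion₂.2 ⟨pick p, Finset.mem_image_of_mem _ (Finset.mem_filter.2 ⟨hp, hne⟩), ?_⟩
    have hpick : dist (pick p) p ≤ δ := by
      simp only [pick, dif_pos hne]
      exact hne.some_mem.2
    rw [mem_closedBall] at hxp ⊢
    linarith [dist_triangle_right x (pick p) p]

theorem coverNum_image_le {F : Set α} (hF : TotallyBounded F) {Φ : α → β} {K : ℝ≥0}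
    (hΦ : LipschitzOnWith K Φ F) {δ : ℝ} (hδ : 0 < δ) :
    coverNum (Φ '' F) (2 * K * δ) ≤ coverNum F δ := by
  classical
  obtain ⟨t, ht, hFt⟩ := exists_card_eq_coverNum hF hδ
  obtain ⟨t', ht't, ht'F, hFt'⟩ := exists_cover_centers_mem hFt
  refine (coverNum_le_card (t'.image Φ) ?_).trans (Finset.card_image_le.trans (ht ▸ ht't))
  rintro _ ⟨x, hx, rfl⟩
  obtain ⟨p, hp, hxp⟩ := mem_iUnion₂.1 (hFt' hx)
  refine mem_iUnion₂.2 ⟨Φ p, Finset.mem_image_of_mem _ hp, mem_closedBall.2 ?_⟩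
  calc dist (Φ x) (Φ p) ≤ K * dist x p := hΦ.dist_le_mul x hx p (ht'F hp)
    _ ≤ K * (2 * δ) := by gcongr; exact mem_closedBall.1 hxp
    _ = 2 * K * δ := by ring

end CoverNum

section BoxRatio

variable {α β : Type*} [PseudoMetricSpace α] [PseudoMetricSpace β]

theorem eventually_boxRatio_nonneg (F : Set α) : ∀ᶠ δ in 𝓝[>] 0, 0 ≤ boxRatio F δ := by
  filter_upwards [Ioo_mem_nhdsGT one_pos] with δ hδ
  exact div_nonneg (Real.log_natCast_nonneg _) (neg_nonneg.2 (Real.log_nonpos hδ.1.le hδ.2.le))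

/-- Rescaling `δ` by a fixed factor `c` shifts `-log δ` by `log c`, which is negligible as
`δ → 0`. -/
theorem eventually_boxRatio_le_add {F₁ : Set α} {F₂ : Set β} {c : ℝ} (hc : 0 < c)
    (H : ∀ δ > 0, coverNum F₂ (c * δ) ≤ coverNum F₁ δ) {a ε : ℝ} (hε : 0 < ε)
    (ha : ∀ᶠ δ in 𝓝[>] 0, boxRatio F₁ δ ≤ a) : ∀ᶠ δ in 𝓝[>] 0, boxRatio F₂ δ ≤ a + ε := by
  have hdiv : Tendsto (fun δ => δ / c) (𝓝[>] 0) (𝓝[>] 0) := by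
    refine tendsto_nhdsWithin_of_tendsto_nhds_of_eventually_within _ ?_ ?_
    · simpa using ((continuous_id.div_const c).tendsto (0 : ℝ)).mono_left nhdsWithin_le_nhds
    · filter_upwards [self_mem_nhdsWithin] with δ (hδ : 0 < δ) using div_pos hδ hc
  have hlog : Tendsto (fun δ => -Real.log δ) (𝓝[>] 0) atTop :=
    tendsto_neg_atBot_atTop.comp Real.tendsto_log_nhdsGT_zero
  filter_upwards [hdiv.eventually ha, hdiv.eventually (Ioo_mem_nhdsGT one_pos),
    hlog.eventually_ge_atTop (a * Real.log c / ε), hlog.eventually_gt_atTop 0,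
    self_mem_nhdsWithin] with δ hδa ⟨hδ0, hδ1⟩ hδlog hδpos (hδ : 0 < δ)
  have hlog' : -Real.log (δ / c) = -Real.log δ + Real.log c := by
    rw [Real.log_div hδ.ne' hc.ne']; ring
  have hN : Real.log (coverNum F₂ δ) ≤ Real.log (coverNum F₁ (δ / c)) := by
    have hle := H _ hδ0
    rw [mul_div_cancel₀ _ hc.ne'] at hle
    rcases (coverNum F₂ δ).eq_zero_or_pos with h0 | hpos
    · simpa [h0] using Real.log_natCast_nonneg _
    · exact Real.log_le_log (by exact_mod_cast hpos) (by exact_mod_cast hle)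
  have h₁ : Real.log (coverNum F₁ (δ / c)) ≤ a * -Real.log (δ / c) :=
    (div_le_iff₀ (neg_pos.2 (Real.log_neg hδ0 hδ1))).1 hδa
  have hc' : a * Real.log c ≤ ε * -Real.log δ := by
    rwa [div_le_iff₀' hε] at hδlog
  rw [hlog'] at h₁
  rw [boxRatio, div_le_iff₀ hδpos]
  linarith

theorem isBoundedUnder_boxRatio_of_coverNum_le {F₁ : Set α} {F₂ : Set β} {c : ℝ} (hc : 0 < c)
    (H : ∀ δ > 0, coverNum F₂ (c * δ) ≤ coverNum F₁ δ)
    (hb : IsBoundedUnder (· ≤ ·) (𝓝[>] 0) (boxRatio F₁)) :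
    IsBoundedUnder (· ≤ ·) (𝓝[>] 0) (boxRatio F₂) :=
  let ⟨a, ha⟩ := hb
  ⟨a + 1, eventually_boxRatio_le_add hc H one_pos ha⟩

theorem upperBoxDim_le_of_coverNum_le {F₁ : Set α} {F₂ : Set β} {c : ℝ} (hc : 0 < c)
    (H : ∀ δ > 0, coverNum F₂ (c * δ) ≤ coverNum F₁ δ)
    (hb : IsBoundedUnder (· ≤ ·) (𝓝[>] 0) (boxRatio F₁)) :
    upperBoxDim F₂ ≤ upperBoxDim F₁ := by
  rw [upperBoxDim_eq_limsup_boxRatio, upperBoxDim_eq_limsup_boxRatio]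
  refine le_of_forall_pos_le_add fun ε hε => ?_
  have h₁ : ∀ᶠ δ in 𝓝[>] 0, boxRatio F₁ δ ≤ limsup (boxRatio F₁) (𝓝[>] 0) + ε / 2 :=
    (eventually_lt_of_limsup_lt (by linarith) hb).mono fun _ => le_of_lt
  have h₂ := eventually_boxRatio_le_add hc H (half_pos hε) h₁
  rw [add_assoc, add_halves] at h₂
  exact limsup_le_of_le
    (IsCoboundedUnder.of_frequently_ge (eventually_boxRatio_nonneg F₂).frequently) h₂

/-- Without boundedness both sides are the junk value `0` of an unbounded `limsup`. -/
theorem upperBoxDim_eq_of_coverNum_le {F₁ : Set α} {F₂ : Set β} {c : ℝ} (hc : 0 < c)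
    (H₁₂ : ∀ δ > 0, coverNum F₂ (c * δ) ≤ coverNum F₁ δ)
    (H₂₁ : ∀ δ > 0, coverNum F₁ (c * δ) ≤ coverNum F₂ δ) :
    upperBoxDim F₂ = upperBoxDim F₁ := by
  by_cases hb : IsBoundedUnder (· ≤ ·) (𝓝[>] 0) (boxRatio F₁)
  · exact le_antisymm (upperBoxDim_le_of_coverNum_le hc H₁₂ hb)
      (upperBoxDim_le_of_coverNum_le hc H₂₁ (isBoundedUnder_boxRatio_of_coverNum_le hc H₁₂ hb))
  · have hb₂ : ¬IsBoundedUnder (· ≤ ·) (𝓝[>] 0) (boxRatio F₂) :=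
      fun h => hb (isBoundedUnder_boxRatio_of_coverNum_le hc H₂₁ h)
    rw [upperBoxDim_eq_limsup_boxRatio, upperBoxDim_eq_limsup_boxRatio,
      Real.limsup_of_not_isBoundedUnder hb, Real.limsup_of_not_isBoundedUnder hb₂]

theorem upperBoxDim_image_eq {F : Set α} (hF : IsCompact F) {Φ : α → β} {Ψ : β → α}
    {K L : ℝ≥0} (hΦ : LipschitzOnWith K Φ F) (hΨ : LipschitzOnWith L Ψ (Φ '' F))
    (hΨΦ : LeftInvOn Ψ Φ F) : upperBoxDim (Φ '' F) = upperBoxDim F := by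
  have hK : K ≤ K + L + 1 := le_self_add.trans le_self_add
  have hL : L ≤ K + L + 1 := le_add_self.trans le_self_add
  have hc : (0 : ℝ) < 2 * ↑(K + L + 1) := by positivity
  refine upperBoxDim_eq_of_coverNum_le hc (fun δ hδ => ?_) (fun δ hδ => ?_)
  · exact coverNum_image_le hF.totallyBounded (hΦ.weaken hK) hδ
  · have h := coverNum_image_le (hF.image_of_continuousOn hΦ.continuousOn).totallyBounded
      (hΨ.weaken hL) hδ
    rwa [hΨΦ.image_image] at h

end BoxRatio

section Graph

variable {X : Set ℝ} {f g : ℝ → ℝ}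

theorem lipschitzOnWith_fnGraphOn {K : ℝ}
    (h : ∀ x ∈ X, ∀ y ∈ X, dist (g x) (g y) ≤ K * dist (f x) (f y)) :
    LipschitzOnWith (max 1 K).toNNReal (fun p : ℝ × ℝ => (p.1, g p.1)) (fnGraphOn f X) := by
  refine LipschitzOnWith.of_dist_le' ?_
  rintro _ ⟨x, hx, rfl⟩ _ ⟨y, hy, rfl⟩
  simp only [Prod.dist_eq]
  refine max_le ?_ ?_
  · exact (le_max_left _ _).trans (le_mul_of_one_le_left (by positivity) (le_max_left _ _))
  · exact (h x hx y hy).trans (mul_le_mul (le_max_right _ _) (le_max_right _ _)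
      dist_nonneg (zero_le_one.trans (le_max_left _ _)))

theorem upperBoxDim_fnGraphOn_eq (hX : IsCompact X) (hf : ContinuousOn f X) {K L : ℝ}
    (hgf : ∀ x ∈ X, ∀ y ∈ X, dist (g x) (g y) ≤ K * dist (f x) (f y))
    (hfg : ∀ x ∈ X, ∀ y ∈ X, dist (f x) (f y) ≤ L * dist (g x) (g y)) :
    upperBoxDim (fnGraphOn g X) = upperBoxDim (fnGraphOn f X) := by
  have himage : (fun p : ℝ × ℝ => (p.1, g p.1)) '' fnGraphOn f X = fnGraphOn g X := by
    simp only [fnGraphOn, image_image]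
  have hinv : LeftInvOn (fun p : ℝ × ℝ => (p.1, f p.1)) (fun p => (p.1, g p.1))
      (fnGraphOn f X) := by
    rintro _ ⟨x, -, rfl⟩
    rfl
  have hΨ := lipschitzOnWith_fnGraphOn (X := X) hfg
  rw [← himage] at hΨ ⊢
  exact upperBoxDim_image_eq (hX.image_of_continuousOn (continuousOn_id.prodMk hf))
    (lipschitzOnWith_fnGraphOn hgf) hΨ hinv

end Graph

section Factors

variable {a y z : ℝ}

theorem dist_mul_one_add_mul_le (hy : |a * y| ≤ 1 / 4) (hz : |a * z| ≤ 1 / 4) :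
    dist (y * (1 + a * y)) (z * (1 + a * z)) ≤ 2 * dist y z := by
  rw [Real.dist_eq, Real.dist_eq,
    show y * (1 + a * y) - z * (1 + a * z) = (1 + a * y + a * z) * (y - z) by ring, abs_mul]
  have h : |1 + a * y + a * z| ≤ 2 := by
    rw [abs_le] at hy hz ⊢
    constructor <;> linarith
  gcongr

theorem dist_le_dist_mul_one_add_mul (hy : |a * y| ≤ 1 / 4) (hz : |a * z| ≤ 1 / 4) :
    dist y z ≤ 2 * dist (y * (1 + a * y)) (z * (1 + a * z)) := by
  rw [Real.dist_eq, Real.dist_eq,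
    show y * (1 + a * y) - z * (1 + a * z) = (1 + a * y + a * z) * (y - z) by ring, abs_mul]
  have h : 1 / 2 ≤ |1 + a * y + a * z| := by
    rw [abs_le] at hy hz
    exact le_abs.2 (Or.inl (by linarith))
  nlinarith [abs_nonneg (y - z)]

theorem abs_inv_sub_inv_one_add_mul_mul_eq (hy : |a * y| ≤ 1 / 4) (hz : |a * z| ≤ 1 / 4) :
    |(1 + a * y)⁻¹ - (1 + a * z)⁻¹| * ((1 + a * y) * (1 + a * z)) = |a| * |y - z| := by
  have hy' : 0 < 1 + a * y := by linarith [(abs_le.1 hy).1]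
  have hz' : 0 < 1 + a * z := by linarith [(abs_le.1 hz).1]
  have e : ((1 + a * y)⁻¹ - (1 + a * z)⁻¹) * ((1 + a * y) * (1 + a * z)) = a * (z - y) := by
    field_simp
    ring
  have h := congrArg abs e
  simp only [abs_mul, abs_of_pos hy', abs_of_pos hz'] at h
  rwa [abs_sub_comm z] at h

theorem mul_one_add_mul_mem_Icc (hy : |a * y| ≤ 1 / 4) (hz : |a * z| ≤ 1 / 4) :
    (1 + a * y) * (1 + a * z) ∈ Icc (1 / 2 : ℝ) 2 := by
  rw [abs_le] at hy hz
  constructor <;> nlinarith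

theorem dist_inv_one_add_mul_le (hy : |a * y| ≤ 1 / 4) (hz : |a * z| ≤ 1 / 4) :
    dist (1 + a * y)⁻¹ (1 + a * z)⁻¹ ≤ 2 * |a| * dist y z := by
  have h := abs_inv_sub_inv_one_add_mul_mul_eq hy hz
  have hP := (mul_one_add_mul_mem_Icc hy hz).1
  rw [Real.dist_eq, Real.dist_eq, mul_assoc, ← h]
  nlinarith [abs_nonneg ((1 + a * y)⁻¹ - (1 + a * z)⁻¹)]

theorem abs_mul_dist_le_dist_inv_one_add_mul (hy : |a * y| ≤ 1 / 4) (hz : |a * z| ≤ 1 / 4) :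
    |a| * dist y z ≤ 2 * dist (1 + a * y)⁻¹ (1 + a * z)⁻¹ := by
  have h := abs_inv_sub_inv_one_add_mul_mul_eq hy hz
  have hP := (mul_one_add_mul_mem_Icc hy hz).2
  rw [Real.dist_eq, Real.dist_eq, ← h]
  nlinarith [abs_nonneg ((1 + a * y)⁻¹ - (1 + a * z)⁻¹)]

end Factors

theorem IsCompact.exists_pos_abs_mul_le {X : Set ℝ} (hX : IsCompact X) {f : ℝ → ℝ}
    (hf : ContinuousOn f X) {ε : ℝ} (hε : 0 < ε) : ∃ a > 0, ∀ x ∈ X, |a * f x| ≤ ε := by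
  obtain ⟨C, hC⟩ := hX.exists_bound_of_continuousOn hf
  refine ⟨ε / (|C| + 1), by positivity, fun x hx => ?_⟩
  have hfx : |f x| ≤ |C| + 1 := by linarith [hC x hx, le_abs_self C, Real.norm_eq_abs (f x)]
  rw [abs_mul, abs_of_pos (by positivity)]
  calc ε / (|C| + 1) * |f x| ≤ ε / (|C| + 1) * (|C| + 1) := by gcongr
    _ = ε := div_mul_cancel₀ _ (by positivity)

theorem decomposition_eq_case_general (β : ℝ) (f : ℝ → ℝ)
    (hf : ContinuousOn f (Set.Icc 0 1))
    (hdim : upperBoxDim (G f) = β) :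
    ∃ g h : ℝ → ℝ, ContinuousOn g (Set.Icc 0 1) ∧ ContinuousOn h (Set.Icc 0 1) ∧
      (∀ x ∈ Set.Icc (0:ℝ) 1, f x = g x * h x) ∧
      upperBoxDim (G g) = β ∧ upperBoxDim (G h) = β := by
  obtain ⟨a, ha, hfa⟩ := isCompact_Icc.exists_pos_abs_mul_le hf (by norm_num : (0 : ℝ) < 1 / 4)
  have hne : ∀ x ∈ Icc (0 : ℝ) 1, 1 + a * f x ≠ 0 := fun x hx => by
    linarith [(abs_le.1 (hfa x hx)).1]
  have hcont : ContinuousOn (fun x => 1 + a * f x) (Icc 0 1) := by fun_prop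
  refine ⟨fun x => f x * (1 + a * f x), fun x => (1 + a * f x)⁻¹, hf.mul hcont,
    hcont.inv₀ hne, fun x hx => (mul_inv_cancel_right₀ (hne x hx) _).symm, ?_, ?_⟩ <;>
    rw [← hdim]
  · exact upperBoxDim_fnGraphOn_eq isCompact_Icc hf
      (fun x hx y hy => dist_mul_one_add_mul_le (hfa x hx) (hfa y hy))
      (fun x hx y hy => dist_le_dist_mul_one_add_mul (hfa x hx) (hfa y hy))
  · refine upperBoxDim_fnGraphOn_eq isCompact_Icc hf (L := 2 / a)
      (fun x hx y hy => dist_inv_one_add_mul_le (hfa x hx) (hfa y hy)) fun x hx y hy => ?_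
    have h := abs_mul_dist_le_dist_inv_one_add_mul (hfa x hx) (hfa y hy)
    rwa [abs_of_pos ha, ← le_div_iff₀' ha, mul_div_right_comm] at h

theorem decomposition_eq_case (β : ℝ) (hβ : β ∈ Set.Icc (1:ℝ) 2) (f : ℝ → ℝ)
    (hf : ContinuousOn f (Set.Icc 0 1)) (hne : ∀ x ∈ Set.Icc (0:ℝ) 1, f x ≠ 0)
    (hdim : upperBoxDim (G f) = β) :
    ∃ g h : ℝ → ℝ, ContinuousOn g (Set.Icc 0 1) ∧ ContinuousOn h (Set.Icc 0 1) ∧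
      (∀ x ∈ Set.Icc (0:ℝ) 1, f x = g x * h x) ∧
      upperBoxDim (G g) = β ∧ upperBoxDim (G h) = β :=
  decomposition_eq_case_general β f hf hdim
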